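/- arXiv:1110.4892 — 2 statements merged into one kernel-verified Lean document; each statement's English description precedes it below -/
import Mathlib

section
/- Let p ≥ 2 be an integer. Assume there exist nonzero real numbers a_1 = 1, a_2, …, a_p such that ⟨E_{M1⋯Mk} | F^{N1⋯Nk}⟩ = a_k (ℙ_k)_{M1⋯Mk}^{N1⋯Nk} for k = 2, …, p. Then for all indices M, N1, …, Np the following identity holds in U_{p−1}: ⟦E_M, F^{N1⋯Np}⟧ = (−1)^p (a_p/a_{p−1}) Σ_{M2,…,Mp} (ℙ_p)_{M M2⋯Mp}^{N1⋯Np} F^{M2⋯Mp}. -/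
/-!
`⟦E_M, F^{N}⟧` has degree `p - 1`, so it lies in the span of the `F`-nests of length `p - 1`.
On that span the pairing with the `E`-nests of length `p - 1` is nondegenerate, being
`a_{p-1}` times a projector that fixes these `F`-nests. It therefore suffices to compare
pairings: invariance and graded antisymmetry give
`⟨E_R | ⟦E_M, F^N⟧⟩ = (-1)^p ⟨E_{M R} | F^N⟩ = (-1)^p a_p ℙ_p`, and the right-hand side pairs
to the same value because the `E`-nests of length `p - 1` are fixed by `ℙ_{p-1}`.
For `p = 2` the roles of `ℙ_1` and `a_1` are played by the Kronecker delta and `1`.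
-/

/-- Nested bracket `⟦f M1, ⟦f M2, …, ⟦f M(k-1), f Mk⟧⋯⟧⟧` of a family `f : ι → V`
along a tuple of `k` indices (junk value `0` for `k = 0`). -/
def nest {V : Type} [AddCommGroup V] [Module ℝ V] {ι : Type}
    (bb : V →ₗ[ℝ] V →ₗ[ℝ] V) (f : ι → V) : (k : ℕ) → (Fin k → ι) → V
  | 0, _ => 0
  | 1, M => f (M 0)
  | (k + 2), M => bb (f (M 0)) (nest bb f (k + 1) (fun i => M i.succ))

open Finset Submodule

section NestedBrackets

variable {V ι : Type} [AddCommGroup V] [Module ℝ V] (bb : V →ₗ[ℝ] V →ₗ[ℝ] V)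

lemma nest_cons (f : ι → V) (m : ℕ) (i : ι) (R : Fin (m + 1) → ι) :
    nest bb f (m + 2) (Fin.cons i R) = bb (f i) (nest bb f (m + 1) R) := by
  simp [nest]

lemma nest_mem {U : ℤ → Submodule ℝ V}
    (hgrade : ∀ (p q : ℤ) (x y : V), x ∈ U p → y ∈ U q → bb x y ∈ U (p + q))
    {f : ι → V} {d : ℤ} (hf : ∀ i, f i ∈ U d) (m : ℕ) (R : Fin (m + 1) → ι) :
    nest bb f (m + 1) R ∈ U ((m + 1) * d) := by
  induction m with
  | zero => simpa [nest] using hf (R 0)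
  | succ m ih =>
    rw [show ((m + 1 : ℕ) + 1 : ℤ) * d = d + (m + 1) * d by push_cast; ring]
    exact hgrade _ _ _ _ (hf (R 0)) (ih (Fin.tail R))

end NestedBrackets

lemma form_bracket_right_swap {V : Type} [AddCommGroup V] [Module ℝ V] {U : ℤ → Submodule ℝ V}
    {bb : V →ₗ[ℝ] V →ₗ[ℝ] V} {form : V →ₗ[ℝ] V →ₗ[ℝ] ℝ}
    (hanti : ∀ (p q : ℤ) (x y : V), x ∈ U p → y ∈ U q →
      bb x y = (-((-1 : ℝ) ^ (p * q))) • bb y x)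
    (hforminv : ∀ x y z : V, form (bb x y) z = form x (bb y z))
    {p q : ℤ} {x y : V} (hx : x ∈ U p) (hy : y ∈ U q) (z : V) :
    form x (bb y z) = -(-1 : ℝ) ^ (p * q) * form (bb y x) z := by
  rw [← hforminv, hanti p q x y hx hy, map_smul, LinearMap.smul_apply, smul_eq_mul]

section Pairing

variable {V σ : Type} [AddCommGroup V] [Module ℝ V] [Fintype σ]
  {form : V →ₗ[ℝ] V →ₗ[ℝ] ℝ} {e f : σ → V} {P : σ → σ → ℝ} {c : ℝ}

lemma form_sum_smul (hef : ∀ R Q, form (e R) (f Q) = c * P R Q) (R : σ) (w : σ → ℝ) :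
    form (e R) (∑ Q, w Q • f Q) = c * ∑ Q, P R Q * w Q := by
  simp only [map_sum, map_smul, hef, smul_eq_mul, mul_sum]
  exact sum_congr rfl fun Q _ => by ring

lemma eq_zero_of_forall_form_eq_zero (hc : c ≠ 0) (hef : ∀ R Q, form (e R) (f Q) = c * P R Q)
    (hf : ∀ Q, f Q = ∑ R, P R Q • f R) {x : V} (hx : x ∈ span ℝ (Set.range f))
    (h0 : ∀ R, form (e R) x = 0) : x = 0 := by
  obtain ⟨w, rfl⟩ := (mem_span_range_iff_exists_fun ℝ).mp hx
  have hPw : ∀ R, ∑ Q, P R Q * w Q = 0 := fun R => by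
    simpa [form_sum_smul hef, hc] using h0 R
  calc ∑ Q, w Q • f Q = ∑ Q, w Q • ∑ R, P R Q • f R := by simp_rw [← hf]
    _ = ∑ R, (∑ Q, P R Q * w Q) • f R := by
      simp only [smul_sum, smul_smul, sum_smul]
      rw [sum_comm]
      simp_rw [mul_comm]
    _ = 0 := by simp [hPw]

end Pairing

section Superalgebra

variable {V ι : Type} [AddCommGroup V] [Module ℝ V] [Fintype ι] {U : ℤ → Submodule ℝ V}
  {bb : V →ₗ[ℝ] V →ₗ[ℝ] V} {form : V →ₗ[ℝ] V →ₗ[ℝ] ℝ} {E F : ι → V}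

theorem bracket_E_nest_F_eq_sum
    (hgrade : ∀ (p q : ℤ) (x y : V), x ∈ U p → y ∈ U q → bb x y ∈ U (p + q))
    (hanti : ∀ (p q : ℤ) (x y : V), x ∈ U p → y ∈ U q →
      bb x y = (-((-1 : ℝ) ^ (p * q))) • bb y x)
    (hforminv : ∀ x y z : V, form (bb x y) z = form x (bb y z))
    (hE : ∀ M, E M ∈ U (-1)) (hF : ∀ M, F M ∈ U 1) {m : ℕ}
    (hspan : U ((m + 1 : ℕ) : ℤ) ≤ span ℝ (Set.range (nest bb F (m + 1))))
    {P₁ : (Fin (m + 1) → ι) → (Fin (m + 1) → ι) → ℝ}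
    {P₂ : (Fin (m + 2) → ι) → (Fin (m + 2) → ι) → ℝ} {a₁ a₂ : ℝ} (ha₁ : a₁ ≠ 0)
    (hPE : ∀ R, nest bb E (m + 1) R = ∑ Q, P₁ R Q • nest bb E (m + 1) Q)
    (hPF : ∀ Q, nest bb F (m + 1) Q = ∑ R, P₁ R Q • nest bb F (m + 1) R)
    (hpair₁ : ∀ R Q, form (nest bb E (m + 1) R) (nest bb F (m + 1) Q) = a₁ * P₁ R Q)
    (hpair₂ : ∀ R Q, form (nest bb E (m + 2) R) (nest bb F (m + 2) Q) = a₂ * P₂ R Q)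
    (M : ι) (N : Fin (m + 2) → ι) :
    bb (E M) (nest bb F (m + 2) N) = ((-1 : ℝ) ^ (m + 2) * (a₂ / a₁)) •
      ∑ Q, P₂ (Fin.cons M Q) N • nest bb F (m + 1) Q := by
  have hproj : ∀ R, form (nest bb E (m + 2) (Fin.cons M R)) (nest bb F (m + 2) N)
      = a₂ * ∑ Q, P₁ R Q * P₂ (Fin.cons M Q) N := fun R => by
    rw [nest_cons, hPE R, map_sum, map_sum, LinearMap.sum_apply, mul_sum]
    refine sum_congr rfl fun Q _ => ?_
    simp only [map_smul, LinearMap.smul_apply, smul_eq_mul]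
    rw [← nest_cons, hpair₂]
    ring
  have hsign : -(-1 : ℝ) ^ (((m : ℤ) + 1) * -1 * -1) = (-1) ^ (m + 2) := by
    rw [show ((m : ℤ) + 1) * -1 * -1 = ((m + 1 : ℕ) : ℤ) by push_cast; ring, zpow_natCast]
    ring
  refine sub_eq_zero.mp (eq_zero_of_forall_form_eq_zero ha₁ hpair₁ hPF
    (sub_mem (hspan ?_) (smul_mem _ _ (sum_mem fun Q _ => smul_mem _ _ (subset_span ⟨Q, rfl⟩))))
    fun R => ?_)
  · convert hgrade _ _ _ _ (hE M) (nest_mem bb hgrade hF (m + 1) N) using 2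
    push_cast
    ring
  · rw [map_sub, sub_eq_zero, form_bracket_right_swap hanti hforminv
      (nest_mem bb hgrade hE m R) (hE M), ← nest_cons, hsign, hproj, map_smul, smul_eq_mul,
      form_sum_smul hpair₁]
    field_simp

end Superalgebra

theorem bracket_E_with_F_multi_general
    {V : Type} [AddCommGroup V] [Module ℝ V]
    (U : ℤ → Submodule ℝ V)
    (bb : V →ₗ[ℝ] V →ₗ[ℝ] V)
    (form : V →ₗ[ℝ] V →ₗ[ℝ] ℝ)
    (hgrade : ∀ (p q : ℤ) (x y : V), x ∈ U p → y ∈ U q → bb x y ∈ U (p + q))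
    (hanti : ∀ (p q : ℤ) (x y : V), x ∈ U p → y ∈ U q →
      bb x y = (-((-1 : ℝ) ^ (p * q))) • bb y x)
    (hforminv : ∀ x y z : V, form (bb x y) z = form x (bb y z))
    {ι : Type} [Fintype ι] [DecidableEq ι]
    (E F : ι → V)
    (hE : ∀ M, E M ∈ U (-1))
    (hF : ∀ M, F M ∈ U 1)
    (hEF : ∀ M N, form (E M) (F N) = if M = N then (1 : ℝ) else 0)
    (hspanF : ∀ m : ℕ, 1 ≤ m → U (m : ℤ) ≤ Submodule.span ℝ (Set.range (nest bb F m)))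
    (k : ℕ)
    (P : (m : ℕ) → (Fin m → ι) → (Fin m → ι) → ℝ)
    (hP1 : ∀ M N : Fin 1 → ι, P 1 M N = if M 0 = N 0 then (1 : ℝ) else 0)
    (hPE : ∀ m, 2 ≤ m → m ≤ k + 2 → ∀ M : Fin m → ι,
      nest bb E m M = ∑ N : Fin m → ι, P m M N • nest bb E m N)
    (hPF : ∀ m, 2 ≤ m → m ≤ k + 2 → ∀ N : Fin m → ι,
      nest bb F m N = ∑ M : Fin m → ι, P m M N • nest bb F m M)
    (a : ℕ → ℝ)
    (ha1 : a 1 = 1)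
    (hane : ∀ m, 1 ≤ m → m ≤ k + 2 → a m ≠ 0)
    (haP : ∀ m, 2 ≤ m → m ≤ k + 2 → ∀ M N : Fin m → ι,
      form (nest bb E m M) (nest bb F m N) = a m * P m M N) :
    ∀ (M : ι) (N : Fin (k + 2) → ι),
      bb (E M) (nest bb F (k + 2) N)
        = ((-1 : ℝ) ^ (k + 2) * (a (k + 2) / a (k + 1))) •
            ∑ Q : Fin (k + 1) → ι, P (k + 2) (Fin.cons M Q) N • nest bb F (k + 1) Q := by
  intro M N
  rcases k with _ | k
  · have hδ : ∀ R Q : Fin 1 → ι, P 1 R Q = if R = Q then 1 else 0 := fun R Q => by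
      simp [hP1, funext_iff, Fin.forall_fin_one]
    exact bracket_E_nest_F_eq_sum hgrade hanti hforminv hE hF (hspanF 1 le_rfl)
      (P₁ := P 1) (ha1 ▸ one_ne_zero) (fun R => by simp [hδ]) (fun Q => by simp [hδ])
      (fun R Q => by simp [hδ, hEF, ha1, nest, funext_iff, Fin.forall_fin_one])
      (haP 2 le_rfl le_rfl) M N
  · exact bracket_E_nest_F_eq_sum hgrade hanti hforminv hE hF (hspanF _ (by omega))
      (hane _ (by omega) (by omega)) (hPE _ (by omega) (by omega)) (hPF _ (by omega) (by omega))
      (haP _ (by omega) (by omega)) (haP _ (by omega) le_rfl) M N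

/-- In a ℤ-graded Lie superalgebra with an invariant bilinear form,
families `E`, `F` in degrees `∓1` with `⟨E_M|F^N⟩ = δ_M^N`, nested elements spanning
the graded pieces, projectors `ℙ_k` and nonzero constants `a_k` (with `a_1 = 1`) such
that `⟨E_{M1⋯Mk}|F^{N1⋯Nk}⟩ = a_k ℙ_k` for `2 ≤ k ≤ p`, we have (with `p = k + 2 ≥ 2`)
`⟦E_M, F^{N1⋯Np}⟧ = (−1)^p (a_p/a_{p−1}) Σ (ℙ_p)_{M M2⋯Mp}{}^{N1⋯Np} F^{M2⋯Mp}`. -/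
theorem bracket_E_with_F_multi
    {V : Type} [AddCommGroup V] [Module ℝ V]
    (U : ℤ → Submodule ℝ V)
    (bb : V →ₗ[ℝ] V →ₗ[ℝ] V)
    (form : V →ₗ[ℝ] V →ₗ[ℝ] ℝ)
    (hgrade : ∀ (p q : ℤ) (x y : V), x ∈ U p → y ∈ U q → bb x y ∈ U (p + q))
    (hanti : ∀ (p q : ℤ) (x y : V), x ∈ U p → y ∈ U q →
      bb x y = (-((-1 : ℝ) ^ (p * q))) • bb y x)
    (hjac : ∀ (p q : ℤ) (x y z : V), x ∈ U p → y ∈ U q →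
      bb (bb x y) z = bb x (bb y z) - ((-1 : ℝ) ^ (p * q)) • bb y (bb x z))
    (hform0 : ∀ (p q : ℤ) (x y : V), x ∈ U p → y ∈ U q → p + q ≠ 0 → form x y = 0)
    (hforminv : ∀ x y z : V, form (bb x y) z = form x (bb y z))
    {ι : Type} [Fintype ι] [DecidableEq ι]
    (E F : ι → V)
    (hE : ∀ M, E M ∈ U (-1))
    (hF : ∀ M, F M ∈ U 1)
    (hEF : ∀ M N, form (E M) (F N) = if M = N then (1 : ℝ) else 0)
    (hspanE : ∀ m : ℕ, 1 ≤ m → U (-(m : ℤ)) ≤ Submodule.span ℝ (Set.range (nest bb E m)))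
    (hspanF : ∀ m : ℕ, 1 ≤ m → U (m : ℤ) ≤ Submodule.span ℝ (Set.range (nest bb F m)))
    (k : ℕ)
    (P : (m : ℕ) → (Fin m → ι) → (Fin m → ι) → ℝ)
    (hP1 : ∀ M N : Fin 1 → ι, P 1 M N = if M 0 = N 0 then (1 : ℝ) else 0)
    (hPidem : ∀ m, 2 ≤ m → m ≤ k + 2 → ∀ M N : Fin m → ι,
      ∑ Q : Fin m → ι, P m M Q * P m Q N = P m M N)
    (hPE : ∀ m, 2 ≤ m → m ≤ k + 2 → ∀ M : Fin m → ι,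
      nest bb E m M = ∑ N : Fin m → ι, P m M N • nest bb E m N)
    (hPF : ∀ m, 2 ≤ m → m ≤ k + 2 → ∀ N : Fin m → ι,
      nest bb F m N = ∑ M : Fin m → ι, P m M N • nest bb F m M)
    (hPnest : ∀ m : ℕ, 2 ≤ m + 1 → m + 1 ≤ k + 2 → ∀ M N : Fin (m + 1) → ι,
      P (m + 1) M N = ∑ A : Fin m → ι, ∑ B : Fin m → ι,
        P m (Fin.tail M) A * P (m + 1) (Fin.cons (M 0) A) (Fin.cons (N 0) B) *
          P m B (Fin.tail N))
    (a : ℕ → ℝ)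
    (ha1 : a 1 = 1)
    (hane : ∀ m, 1 ≤ m → m ≤ k + 2 → a m ≠ 0)
    (haP : ∀ m, 2 ≤ m → m ≤ k + 2 → ∀ M N : Fin m → ι,
      form (nest bb E m M) (nest bb F m N) = a m * P m M N) :
    ∀ (M : ι) (N : Fin (k + 2) → ι),
      bb (E M) (nest bb F (k + 2) N)
        = ((-1 : ℝ) ^ (k + 2) * (a (k + 2) / a (k + 1))) •
            ∑ Q : Fin (k + 1) → ι, P (k + 2) (Fin.cons M Q) N • nest bb F (k + 1) Q :=
  bracket_E_with_F_multi_general U bb form hgrade hanti hforminv E F hE hF hEF hspanF k P hP1 hPE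
    hPF a ha1 hane haP
end

section
/- Let f_M{}^N{}_P{}^Q be the real structure constants defined by ⟦⟦E_M, F^N⟧, E_P⟧ = Σ_Q f_M{}^N{}_P{}^Q E_Q. Then for every p ≥ 2 and all indices N, M1, …, Mp the following identity holds in U_{−(p−1)}: ⟦F^N, E_{M1⋯Mp}⟧ = Σ_{i=1}^{p−1} Σ_{j=i+1}^{p} (−1)^{i+1} Σ_P f_{Mi}{}^N{}_{Mj}{}^P · E_{M1⋯M(i−1) M(i+1)⋯M(j−1) P M(j+1)⋯Mp} + (−1)^p Σ_P f_{Mp}{}^N{}_{M(p−1)}{}^P · E_{M1⋯M(p−2) P}, where in each term of the double sum the index Mi is removed and Mj is replaced by the summation index P. -/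
section Nest

variable {V ι : Type} [AddCommGroup V] [Module ℝ V] (bb : V →ₗ[ℝ] V →ₗ[ℝ] V) (E : ι → V)

theorem nest_one (M : Fin 1 → ι) : nest bb E 1 M = E (M 0) := rfl

theorem nest_succ_succ (k : ℕ) (M : Fin (k + 2) → ι) :
    nest bb E (k + 2) M = bb (E (M 0)) (nest bb E (k + 1) (Fin.tail M)) := rfl

theorem nest_update_succAbove_succ (k : ℕ) (M : Fin (k + 3) → ι) {i j : Fin (k + 2)} (hij : i < j)
    (Q : ι) :
    nest bb E (k + 2) (Function.update (fun t => M (i.succ.succAbove t)) j Q)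
      = bb (E (M 0)) (nest bb E (k + 1) (Function.update (fun t => Fin.tail M (i.succAbove t))
          ⟨(j : ℕ) - 1, (Nat.sub_le_sub_right j.is_le 1).trans_lt k.lt_succ_self⟩ Q)) := by
  obtain ⟨j, rfl⟩ := Fin.exists_succ_eq.mpr (Fin.ne_zero_of_lt hij)
  simp only [Fin.val_succ, Nat.add_sub_cancel, Fin.eta]
  rw [nest_succ_succ, Fin.tail_update_succ, Function.update_of_ne (Fin.succ_ne_zero j).symm,
    Fin.succ_succAbove_zero]
  congr 3
  funext t
  exact congrArg M (Fin.succ_succAbove_succ i t)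

variable [Fintype ι]

theorem map_nest_of_leibniz (D : V →ₗ[ℝ] V)
    (hD : ∀ M y, D (bb (E M) y) = bb (D (E M)) y + bb (E M) (D y))
    (c : ι → ι → ℝ) (hc : ∀ M, D (E M) = ∑ Q, c M Q • E Q) :
    ∀ (k : ℕ) (M : Fin (k + 1) → ι), D (nest bb E (k + 1) M)
      = ∑ j, ∑ Q, c (M j) Q • nest bb E (k + 1) (Function.update M j Q)
  | 0, M => by simp [nest_one, hc]
  | k + 1, M => by
    rw [nest_succ_succ, hD, map_nest_of_leibniz D hD c hc k, hc, Fin.sum_univ_succ (n := k + 1),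
      map_sum, LinearMap.sum_apply, map_sum]
    congr 1
    · refine Finset.sum_congr rfl fun Q _ => ?_
      rw [map_smul, LinearMap.smul_apply, nest_succ_succ, Fin.tail_update_zero,
        Function.update_self]
    · refine Finset.sum_congr rfl fun j _ => ?_
      rw [map_sum]
      refine Finset.sum_congr rfl fun Q _ => ?_
      rw [map_smul, nest_succ_succ (M := Function.update M j.succ Q), Fin.tail_update_succ,
        Function.update_of_ne (Fin.succ_ne_zero j).symm]
      rfl

-- Deleting the letter at position `i < j` moves the letter `M j` to position `j - 1`.
def contractionSum (f : ι → ι → ι → ι → ℝ) (k : ℕ) (n : ι) (M : Fin (k + 2) → ι) : V :=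
  ∑ i : Fin (k + 2), ∑ j : Fin (k + 2),
    if i < j then
      ((-1 : ℝ) ^ (i : ℕ)) •
        ∑ Pq : ι, f (M i) n (M j) Pq •
          nest bb E (k + 1)
            (Function.update (fun t : Fin (k + 1) => M (i.succAbove t))
              ⟨(j : ℕ) - 1, (Nat.sub_le_sub_right j.is_le 1).trans_lt k.lt_succ_self⟩ Pq)
    else 0

def lastContraction (f : ι → ι → ι → ι → ℝ) (k : ℕ) (n : ι) (M : Fin (k + 2) → ι) : V :=
  ((-1 : ℝ) ^ (k + 2)) •
    ∑ Pq : ι, f (M (Fin.last (k + 1))) n (M ⟨k, Nat.lt_add_of_pos_right two_pos⟩) Pq •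
      nest bb E (k + 1) (Fin.snoc (fun t : Fin k => M ⟨(t : ℕ), Nat.lt_add_right 2 t.isLt⟩) Pq)

variable (f : ι → ι → ι → ι → ℝ)

theorem contractionSum_zero (n : ι) (M : Fin 2 → ι) :
    contractionSum bb E f 0 n M = ∑ Q, f (M 0) n (M 1) Q • E Q := by
  simp [contractionSum, Fin.sum_univ_two, nest_one]

theorem lastContraction_zero (n : ι) (M : Fin 2 → ι) :
    lastContraction bb E f 0 n M = ∑ Q, f (M 1) n (M 0) Q • E Q := by
  simp [lastContraction, nest_one, Fin.snoc]

theorem contractionSum_succ (k : ℕ) (n : ι) (M : Fin (k + 3) → ι) :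
    contractionSum bb E f (k + 1) n M
      = ∑ j, ∑ Q, f (M 0) n (Fin.tail M j) Q •
          nest bb E (k + 2) (Function.update (Fin.tail M) j Q)
        - bb (E (M 0)) (contractionSum bb E f k n (Fin.tail M)) := by
  rw [contractionSum, Fin.sum_univ_succ, Fin.sum_univ_succ, if_neg (lt_irrefl _), zero_add,
    sub_eq_add_neg, contractionSum, map_sum, ← Finset.sum_neg_distrib]
  congr 1
  · refine Finset.sum_congr rfl fun j _ => ?_
    rw [if_pos (Fin.succ_pos j), Fin.val_zero, pow_zero, one_smul]
    rfl
  · refine Finset.sum_congr rfl fun i _ => ?_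
    rw [Fin.sum_univ_succ, if_neg (Fin.succ_pos i).not_gt, zero_add, map_sum,
      ← Finset.sum_neg_distrib]
    refine Finset.sum_congr rfl fun j _ => ?_
    by_cases hij : i < j
    · rw [if_pos (Fin.succ_lt_succ_iff.mpr hij), if_pos hij, Fin.val_succ, pow_succ, mul_neg_one,
        neg_smul, map_smul, map_sum]
      refine congrArg Neg.neg (congrArg _ (Finset.sum_congr rfl fun Q _ => ?_))
      simp only [Fin.val_succ, Nat.add_sub_cancel, Fin.eta]
      rw [map_smul, nest_update_succAbove_succ bb E k M hij]
      rfl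
    · rw [if_neg (fun h => hij (Fin.succ_lt_succ_iff.mp h)), if_neg hij, map_zero, neg_zero]

theorem lastContraction_succ (k : ℕ) (n : ι) (M : Fin (k + 3) → ι) :
    lastContraction bb E f (k + 1) n M
      = -bb (E (M 0)) (lastContraction bb E f k n (Fin.tail M)) := by
  rw [lastContraction, lastContraction, map_smul, map_sum, pow_succ, mul_neg_one, neg_smul]
  refine congrArg Neg.neg (congrArg _ (Finset.sum_congr rfl fun Q _ => ?_))
  rw [map_smul, nest_succ_succ, Fin.snoc_apply_zero]
  congr 3
  funext t
  refine Fin.lastCases ?_ (fun t => ?_) t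
  · simp only [Fin.tail, Fin.succ_last, Fin.snoc_last]
  · simp only [Fin.tail, Fin.succ_castSucc, Fin.snoc_castSucc]
    rfl

end Nest

section GradedBracket

variable {V : Type} [AddCommGroup V] [Module ℝ V] (U : ℤ → Submodule ℝ V)
  (bb : V →ₗ[ℝ] V →ₗ[ℝ] V)

def IsGradedBracket : Prop :=
  ∀ (p q : ℤ) (x y : V), x ∈ U p → y ∈ U q → bb x y ∈ U (p + q)

def IsGradedAntisymm : Prop :=
  ∀ (p q : ℤ) (x y : V), x ∈ U p → y ∈ U q → bb x y = (-((-1 : ℝ) ^ (p * q))) • bb y x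

def IsGradedJacobi : Prop :=
  ∀ (p q : ℤ) (x y z : V), x ∈ U p → y ∈ U q →
    bb (bb x y) z = bb x (bb y z) - ((-1 : ℝ) ^ (p * q)) • bb y (bb x z)

variable {U bb}

theorem bracket_bracket_of_mem
    (hjac : IsGradedJacobi U bb)
    {p q : ℤ} {x y : V} (hx : x ∈ U p) (hy : y ∈ U q) (z : V) :
    bb x (bb y z) = bb (bb x y) z + ((-1 : ℝ) ^ (p * q)) • bb y (bb x z) := by
  rw [hjac p q x y z hx hy, sub_add_cancel]

theorem bracket_mem_zero
    (hgrade : IsGradedBracket U bb)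
    {x y : V} (hx : x ∈ U (-1)) (hy : y ∈ U 1) : bb x y ∈ U 0 := by
  simpa using hgrade _ _ x y hx hy

theorem bracket_comm_of_mem_one_of_mem_neg_one
    (hanti : IsGradedAntisymm U bb)
    {x y : V} (hx : x ∈ U 1) (hy : y ∈ U (-1)) : bb x y = bb y x := by
  simpa using hanti 1 (-1) x y hx hy

theorem bracket_anticomm_of_mem_zero
    (hanti : IsGradedAntisymm U bb)
    {p : ℤ} {x h : V} (hx : x ∈ U p) (hh : h ∈ U 0) : bb x h = -bb h x := by
  simpa using hanti p 0 x h hx hh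

theorem bracket_leibniz_of_mem_zero
    (hjac : IsGradedJacobi U bb)
    {q : ℤ} {h y : V} (hh : h ∈ U 0) (hy : y ∈ U q) (z : V) :
    bb h (bb y z) = bb (bb h y) z + bb y (bb h z) := by
  simpa using bracket_bracket_of_mem hjac hh hy z

theorem bracket_odd_bracket_of_mem
    (hanti : IsGradedAntisymm U bb)
    (hjac : IsGradedJacobi U bb)
    {x y : V} (hx : x ∈ U 1) (hy : y ∈ U (-1)) (z : V) :
    bb x (bb y z) = bb (bb y x) z - bb y (bb x z) := by
  rw [bracket_bracket_of_mem hjac hx hy, bracket_comm_of_mem_one_of_mem_neg_one hanti hx hy]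
  norm_num [sub_eq_add_neg]

end GradedBracket

theorem bracket_nest_eq_contractions {V : Type} [AddCommGroup V] [Module ℝ V]
    {U : ℤ → Submodule ℝ V} {bb : V →ₗ[ℝ] V →ₗ[ℝ] V}
    (hgrade : IsGradedBracket U bb) (hanti : IsGradedAntisymm U bb) (hjac : IsGradedJacobi U bb)
    {ι : Type} [Fintype ι] {E F : ι → V} (hE : ∀ M, E M ∈ U (-1)) (hF : ∀ M, F M ∈ U 1)
    {f : ι → ι → ι → ι → ℝ}
    (hf : ∀ M N Pt, bb (bb (E M) (F N)) (E Pt) = ∑ Q : ι, f M N Pt Q • E Q) :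
    ∀ (k : ℕ) (n : ι) (M : Fin (k + 2) → ι),
      bb (F n) (nest bb E (k + 2) M) = contractionSum bb E f k n M + lastContraction bb E f k n M
  | 0, n, M => by
    rw [nest_succ_succ, nest_one, bracket_odd_bracket_of_mem hanti hjac (hF n) (hE (M 0)),
      bracket_comm_of_mem_one_of_mem_neg_one hanti (hF n) (hE _),
      bracket_anticomm_of_mem_zero hanti (hE (M 0)) (bracket_mem_zero hgrade (hE _) (hF n)), hf, hf,
      contractionSum_zero, lastContraction_zero, sub_neg_eq_add]
    rfl
  | k + 1, n, M => by
    rw [nest_succ_succ, bracket_odd_bracket_of_mem hanti hjac (hF n) (hE (M 0)),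
      map_nest_of_leibniz bb E _
        (fun P => bracket_leibniz_of_mem_zero hjac (bracket_mem_zero hgrade (hE _) (hF n)) (hE P))
        (f (M 0) n) (hf (M 0) n),
      bracket_nest_eq_contractions hgrade hanti hjac hE hF hf k n (Fin.tail M), map_add,
      contractionSum_succ, lastContraction_succ]
    abel

/-- With structure constants `f_M{}^N{}_P{}^Q` defined by
`⟦⟦E_M, F^N⟧, E_P⟧ = Σ_Q f_M{}^N{}_P{}^Q E_Q`, for every `p = k + 2 ≥ 2`:
`⟦F^N, E_{M1⋯Mp}⟧ = Σ_{i<j} (−1)^{i+1} Σ_P f_{Mi}{}^N{}_{Mj}{}^P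
E_{M1⋯M(i−1)M(i+1)⋯M(j−1)PM(j+1)⋯Mp} + (−1)^p Σ_P f_{Mp}{}^N{}_{M(p−1)}{}^P E_{M1⋯M(p−2)P}`
(here the Lean index `i : Fin p` is the paper index `i` shifted by one, so the paper
sign `(−1)^{i+1}` is `(−1)^{i}` for `i : Fin p`). -/
theorem bracket_F_with_E_multi_expansion
    {V : Type} [AddCommGroup V] [Module ℝ V]
    (U : ℤ → Submodule ℝ V)
    (bb : V →ₗ[ℝ] V →ₗ[ℝ] V)
    (hgrade : ∀ (p q : ℤ) (x y : V), x ∈ U p → y ∈ U q → bb x y ∈ U (p + q))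
    (hanti : ∀ (p q : ℤ) (x y : V), x ∈ U p → y ∈ U q →
      bb x y = (-((-1 : ℝ) ^ (p * q))) • bb y x)
    (hjac : ∀ (p q : ℤ) (x y z : V), x ∈ U p → y ∈ U q →
      bb (bb x y) z = bb x (bb y z) - ((-1 : ℝ) ^ (p * q)) • bb y (bb x z))
    {ι : Type} [Fintype ι]
    (E F : ι → V)
    (hE : ∀ M, E M ∈ U (-1))
    (hF : ∀ M, F M ∈ U 1)
    (f : ι → ι → ι → ι → ℝ)
    (hf : ∀ M N Pt, bb (bb (E M) (F N)) (E Pt) = ∑ Q : ι, f M N Pt Q • E Q)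
    (k : ℕ) :
    ∀ (n : ι) (M : Fin (k + 2) → ι),
      bb (F n) (nest bb E (k + 2) M)
        = (∑ i : Fin (k + 2), ∑ j : Fin (k + 2),
            if i < j then
              ((-1 : ℝ) ^ (i : ℕ)) •
                ∑ Pq : ι, f (M i) n (M j) Pq •
                  nest bb E (k + 1)
                    (Function.update (fun t : Fin (k + 1) => M (i.succAbove t))
                      ⟨(j : ℕ) - 1, by have := j.isLt; omega⟩ Pq)
            else 0)
          + ((-1 : ℝ) ^ (k + 2)) •
              ∑ Pq : ι, f (M (Fin.last (k + 1))) n (M ⟨k, by omega⟩) Pq •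
                nest bb E (k + 1)
                  (Fin.snoc (fun t : Fin k => M ⟨(t : ℕ), by have := t.isLt; omega⟩) Pq) := by
  exact bracket_nest_eq_contractions hgrade hanti hjac hE hF hf k
end
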